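/- Let β > 0 and let a be a real number with |a| < β. Then 0 ≤ 2β ∫₀^a artanh(t/β) dt ≤ β² (artanh(a/β))². -/

import Mathlib

/-!
The substitution t = β s turns the penalty into β² · 2∫₀^x artanh with x = a/β ∈ (-1, 1), so
β = 1 suffices. On the interval between 0 and x, artanh has the sign of x, which gives the lower
bound. For the upper bound, artanh x² = ∫₀^x 2 artanh t / (1 - t²) dt, so
artanh x² - 2∫₀^x artanh = ∫₀^x 2 t² artanh t / (1 - t²) dt, whose integrand again has the sign of x.
-/

open intervalIntegral

/-- The inverse hyperbolic tangent on (-1, 1). -/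
noncomputable def artanh (x : ℝ) : ℝ := Real.log ((1 + x) / (1 - x)) / 2

open Set

lemma integral_nonneg_of_forall_sub_mul_nonneg {f : ℝ → ℝ} {a b : ℝ}
    (hf : ∀ t ∈ uIcc a b, 0 ≤ (b - a) * f t) : 0 ≤ ∫ t in a..b, f t := by
  rcases lt_trichotomy a b with hab | rfl | hab
  · exact integral_nonneg hab.le fun t ht =>
      nonneg_of_mul_nonneg_right (hf t (Icc_subset_uIcc ht)) (sub_pos.2 hab)
  · simp
  · rw [integral_symm, ← integral_neg]
    exact integral_nonneg hab.le fun t ht =>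
      neg_nonneg.2 (nonpos_of_mul_nonneg_right (hf t (Icc_subset_uIcc' ht)) (sub_neg.2 hab))

lemma artanh_eq_real_artanh {x : ℝ} (hx : x ∈ Icc (-1) 1) : artanh x = Real.artanh x := by
  rw [Real.artanh_eq_half_log hx, artanh]
  ring

lemma artanh_zero : artanh 0 = 0 := by simp [artanh]

lemma one_sub_sq_pos_of_mem_Ioo {t : ℝ} (ht : t ∈ Ioo (-1) 1) : 0 < 1 - t ^ 2 := by
  nlinarith [ht.1, ht.2]

lemma hasDerivAt_artanh {x : ℝ} (hx : x ∈ Ioo (-1) 1) :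
    HasDerivAt artanh (1 - x ^ 2)⁻¹ x := by
  have h₁ : 0 < 1 + x := by linarith [hx.1]
  have h₂ : 0 < 1 - x := by linarith [hx.2]
  have hquot := ((hasDerivAt_id' x).const_add 1).fun_div ((hasDerivAt_id' x).const_sub 1) h₂.ne'
  refine ((hquot.log (div_pos h₁ h₂).ne').div_const 2).congr_deriv ?_
  have := (one_sub_sq_pos_of_mem_Ioo hx).ne'
  field_simp
  ring

lemma continuousOn_artanh : ContinuousOn artanh (Ioo (-1) 1) := fun _ hx =>
  (hasDerivAt_artanh hx).continuousAt.continuousWithinAt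

lemma uIcc_zero_subset_Ioo {x : ℝ} (hx : |x| < 1) : uIcc 0 x ⊆ Ioo (-1) 1 :=
  ordConnected_Ioo.uIcc_subset (by simp) (abs_lt.1 hx)

lemma mul_artanh_nonneg_of_mem_uIcc {x t : ℝ} (hx : |x| < 1) (ht : t ∈ uIcc 0 x) :
    0 ≤ x * artanh t := by
  have ht' := uIcc_zero_subset_Ioo hx ht
  rw [artanh_eq_real_artanh (Ioo_subset_Icc_self ht')]
  rcases le_total 0 x with h | h
  · rw [uIcc_of_le h] at ht
    exact mul_nonneg h (Real.artanh_nonneg ht.1)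
  · rw [uIcc_of_ge h] at ht
    exact mul_nonneg_of_nonpos_of_nonpos h (Real.artanh_nonpos ht.2)

lemma integral_artanh_nonneg {x : ℝ} (hx : |x| < 1) : 0 ≤ ∫ t in (0:ℝ)..x, artanh t :=
  integral_nonneg_of_forall_sub_mul_nonneg fun t ht => by
    simpa using mul_artanh_nonneg_of_mem_uIcc hx ht

lemma continuousOn_artanh_div_one_sub_sq :
    ContinuousOn (fun t => artanh t / (1 - t ^ 2)) (Ioo (-1) 1) :=
  continuousOn_artanh.div (by fun_prop) fun _ ht => (one_sub_sq_pos_of_mem_Ioo ht).ne'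

lemma integral_artanh_div_one_sub_sq {x : ℝ} (hx : |x| < 1) :
    ∫ t in (0:ℝ)..x, artanh t / (1 - t ^ 2) = artanh x ^ 2 / 2 := by
  have hsub := uIcc_zero_subset_Ioo hx
  have hderiv : ∀ t ∈ uIcc 0 x,
      HasDerivAt (fun s => artanh s ^ 2 / 2) (artanh t / (1 - t ^ 2)) t := fun t ht => by
    refine (((hasDerivAt_artanh (hsub ht)).fun_pow 2).div_const 2).congr_deriv ?_
    norm_num
    ring
  rw [integral_eq_sub_of_hasDerivAt hderiv
    (continuousOn_artanh_div_one_sub_sq.mono hsub).intervalIntegrable, artanh_zero]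
  ring

lemma two_mul_integral_artanh_le_sq {x : ℝ} (hx : |x| < 1) :
    2 * ∫ t in (0:ℝ)..x, artanh t ≤ artanh x ^ 2 := by
  have hsub := uIcc_zero_subset_Ioo hx
  suffices 0 ≤ ∫ t in (0:ℝ)..x, (artanh t / (1 - t ^ 2) - artanh t) by
    rw [integral_sub (continuousOn_artanh_div_one_sub_sq.mono hsub).intervalIntegrable
      (continuousOn_artanh.mono hsub).intervalIntegrable, integral_artanh_div_one_sub_sq hx] at this
    linarith
  refine integral_nonneg_of_forall_sub_mul_nonneg fun t ht => ?_
  have hpos := one_sub_sq_pos_of_mem_Ioo (hsub ht)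
  have hfactor : (x - 0) * (artanh t / (1 - t ^ 2) - artanh t)
      = t ^ 2 / (1 - t ^ 2) * (x * artanh t) := by
    field_simp
    ring
  rw [hfactor]
  exact mul_nonneg (by positivity) (mul_artanh_nonneg_of_mem_uIcc hx ht)

/-- two-sided bound on the control penalty
(equations (24)-(26) of the proof of Theorem 1). -/
theorem control_penalty_two_sided_bound (β a : ℝ) (hβ : 0 < β) (ha : |a| < β) :
    0 ≤ 2 * β * ∫ t in (0:ℝ)..a, artanh (t / β) ∧
      2 * β * ∫ t in (0:ℝ)..a, artanh (t / β) ≤ β ^ 2 * (artanh (a / β)) ^ 2 := by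
  have hx : |a / β| < 1 := by rwa [abs_div, abs_of_pos hβ, div_lt_one hβ]
  have hscale : ∫ t in (0:ℝ)..a, artanh (t / β) = β * ∫ t in (0:ℝ)..a / β, artanh t := by
    simp [integral_comp_div _ hβ.ne']
  rw [hscale]
  constructor
  · have := integral_artanh_nonneg hx
    positivity
  · calc 2 * β * (β * ∫ t in (0:ℝ)..a / β, artanh t)
          = β ^ 2 * (2 * ∫ t in (0:ℝ)..a / β, artanh t) := by ring
      _ ≤ β ^ 2 * artanh (a / β) ^ 2 := by gcongr; exact two_mul_integral_artanh_le_sq hx
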